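/- For any nonempty event F, there exists a unique maximally evident C-indicating superset of F: an event G such that G ⊇ F, G is the largest p-evident C-indicating event where p is the C-evidence level of G, and every event H ⊇ F has C-evidence level at most the C-evidence level of G. -/

import Mathlib

/-!
Conditional probabilities are monotone in the event, so a union of `p`-evident `C`-indicating
events is again one: for every `p` there is a largest such event. Let `p` be the largest
evidence level of a superset `H₀` of `F` (finitely many candidates). The largest `p`-evident
`C`-indicating event contains `H₀ ⊇ F`, so its level is at least `p`, hence exactly `p`.
Two maximally evident supersets must have the same level, and then both are the largest
event at that level.
-/

open Finset

variable {Ω : Type*}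

/-- The conditional probability `P_i(E | ω) = μ(E ∩ Π_i(ω)) / μ(Π_i(ω))`,
where `part i ω` is the cell of player `i`'s information partition containing `ω`. -/
noncomputable def condP [Fintype Ω] [DecidableEq Ω] (μ : Ω → ℝ)
    (part : Fin 2 → Ω → Finset Ω) (i : Fin 2) (E : Finset Ω) (ω : Ω) : ℝ :=
  (∑ x ∈ E ∩ part i ω, μ x) / (∑ x ∈ part i ω, μ x)

/-- `E` is `p`-evident: every player `p`-believes `E` at every state of `E`. -/
def pEvident [Fintype Ω] [DecidableEq Ω] (μ : Ω → ℝ)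
    (part : Fin 2 → Ω → Finset Ω) (p : ℝ) (E : Finset Ω) : Prop :=
  ∀ i : Fin 2, ∀ ω ∈ E, p ≤ condP μ part i E ω

/-- `E` is a `p`-evident `C`-indicating event. -/
def pEvidentInd [Fintype Ω] [DecidableEq Ω] (μ : Ω → ℝ)
    (part : Fin 2 → Ω → Finset Ω) (p : ℝ) (C E : Finset Ω) : Prop :=
  pEvident μ part p E ∧ ∀ i : Fin 2, ∀ ω ∈ E, p ≤ condP μ part i C ω

/-- `E` is the largest `p`-evident `C`-indicating event. -/
def isLargestInd [Fintype Ω] [DecidableEq Ω] (μ : Ω → ℝ)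
    (part : Fin 2 → Ω → Finset Ω) (p : ℝ) (C E : Finset Ω) : Prop :=
  pEvidentInd μ part p C E ∧ ∀ F : Finset Ω, pEvidentInd μ part p C F → F ⊆ E

/-- `p` is the `C`-evidence level of `E`: the maximum `q` for which `E` is a
`q`-evident `C`-indicating event. -/
def isEvidenceLevel [Fintype Ω] [DecidableEq Ω] (μ : Ω → ℝ)
    (part : Fin 2 → Ω → Finset Ω) (C E : Finset Ω) (p : ℝ) : Prop :=
  IsGreatest {q : ℝ | pEvidentInd μ part q C E} p

/-- `G` is the maximally evident `C`-indicating superset of `F`. -/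
def isMaxEvidentSup [Fintype Ω] [DecidableEq Ω] (μ : Ω → ℝ)
    (part : Fin 2 → Ω → Finset Ω) (C F G : Finset Ω) : Prop :=
  F ⊆ G ∧ ∃ p : ℝ, isEvidenceLevel μ part C G p ∧ isLargestInd μ part p C G ∧
    ∀ H : Finset Ω, F ⊆ H → ∀ q : ℝ, isEvidenceLevel μ part C H q → q ≤ p

/-- `E` is a maximally evident `C`-indicating event: it is the maximally evident
`C`-indicating superset of some nonempty event. -/
def isMaxEvident [Fintype Ω] [DecidableEq Ω] (μ : Ω → ℝ)
    (part : Fin 2 → Ω → Finset Ω) (C E : Finset Ω) : Prop :=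
  ∃ F : Finset Ω, F.Nonempty ∧ isMaxEvidentSup μ part C F E

/-- `E` is a super-`p`-evident `C`-indicating event. -/
def superEvidentInd [Fintype Ω] [DecidableEq Ω] (μ : Ω → ℝ)
    (part : Fin 2 → Ω → Finset Ω) (p : ℝ) (C E : Finset Ω) : Prop :=
  ∀ i : Fin 2, ∀ ω ∈ E, p < condP μ part i E ω ∧ p < condP μ part i C ω

/-- `E` is the largest super-evident `C`-indicating subset of `F`. -/
def isLargestSuperSub [Fintype Ω] [DecidableEq Ω] (μ : Ω → ℝ)
    (part : Fin 2 → Ω → Finset Ω) (C F E : Finset Ω) : Prop :=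
  E ⊆ F ∧ ∃ p : ℝ, isEvidenceLevel μ part C F p ∧ superEvidentInd μ part p C E ∧
    ∀ G : Finset Ω, G ⊆ F → superEvidentInd μ part p C G → G ⊆ E

section

variable [Fintype Ω] [DecidableEq Ω] (μ : Ω → ℝ) (part : Fin 2 → Ω → Finset Ω)

lemma condP_mono (hμ : ∀ ω, 0 ≤ μ ω) (i : Fin 2) {E E' : Finset Ω} (h : E ⊆ E') (ω : Ω) :
    condP μ part i E ω ≤ condP μ part i E' ω :=
  div_le_div_of_nonneg_right
    (sum_le_sum_of_subset_of_nonneg (inter_subset_inter_right h) fun x _ _ => hμ x)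
    (sum_nonneg fun x _ => hμ x)

/-- The `C`-evidence level of `H`, as a function; its value at `H = ∅` is junk. -/
noncomputable def evidenceLevel (C H : Finset Ω) : ℝ :=
  if hH : H.Nonempty then
    (univ ×ˢ H).inf' (univ_nonempty.product hH)
      fun q => min (condP μ part q.1 H q.2) (condP μ part q.1 C q.2)
  else 0

variable {μ part}

lemma pEvidentInd_iff_le_evidenceLevel {C H : Finset Ω} (hH : H.Nonempty) (q : ℝ) :
    pEvidentInd μ part q C H ↔ q ≤ evidenceLevel μ part C H := by
  rw [evidenceLevel, dif_pos hH, le_inf'_iff]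
  simp only [pEvidentInd, pEvident, Prod.forall, mem_product, mem_univ, true_and, le_min_iff]
  grind

lemma isEvidenceLevel_evidenceLevel {C H : Finset Ω} (hH : H.Nonempty) :
    isEvidenceLevel μ part C H (evidenceLevel μ part C H) :=
  ⟨(pEvidentInd_iff_le_evidenceLevel hH _).2 le_rfl,
    fun q hq => (pEvidentInd_iff_le_evidenceLevel hH q).1 hq⟩

variable (μ part) in
open Classical in
noncomputable def largestInd (p : ℝ) (C : Finset Ω) : Finset Ω :=
  univ.filter fun ω => ∃ E, pEvidentInd μ part p C E ∧ ω ∈ E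

lemma mem_largestInd {p : ℝ} {C : Finset Ω} {ω : Ω} :
    ω ∈ largestInd μ part p C ↔ ∃ E, pEvidentInd μ part p C E ∧ ω ∈ E := by
  simp [largestInd]

lemma isLargestInd_largestInd (hμ : ∀ ω, 0 ≤ μ ω) (p : ℝ) (C : Finset Ω) :
    isLargestInd μ part p C (largestInd μ part p C) := by
  have subset_largestInd {E} (hE : pEvidentInd μ part p C E) : E ⊆ largestInd μ part p C :=
    fun ω hω => mem_largestInd.2 ⟨E, hE, hω⟩
  refine ⟨⟨fun i ω hω => ?_, fun i ω hω => ?_⟩, fun E hE => subset_largestInd hE⟩ <;>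
    obtain ⟨E, hE, hωE⟩ := mem_largestInd.1 hω
  · exact (hE.1 i ω hωE).trans (condP_mono μ part hμ i (subset_largestInd hE) ω)
  · exact hE.2 i ω hωE

lemma exists_isMaxEvidentSup (hμ : ∀ ω, 0 ≤ μ ω) (C : Finset Ω) {F : Finset Ω}
    (hF : F.Nonempty) : ∃ G, isMaxEvidentSup μ part C F G := by
  obtain ⟨H₀, hFH₀, hH₀⟩ := exists_max_image (univ.filter (F ⊆ ·)) (evidenceLevel μ part C)
    ⟨F, by simp⟩
  simp only [mem_filter, mem_univ, true_and] at hFH₀ hH₀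
  set p := evidenceLevel μ part C H₀
  set G := largestInd μ part p C
  have hG : isLargestInd μ part p C G := isLargestInd_largestInd hμ p C
  have hFG : F ⊆ G :=
    hFH₀.trans (hG.2 H₀ ((pEvidentInd_iff_le_evidenceLevel (hF.mono hFH₀) p).2 le_rfl))
  have hGne : G.Nonempty := hF.mono hFG
  have hlevel : evidenceLevel μ part C G = p :=
    (hH₀ G hFG).antisymm ((pEvidentInd_iff_le_evidenceLevel hGne p).1 hG.1)
  refine ⟨G, hFG, p, hlevel ▸ isEvidenceLevel_evidenceLevel hGne, hG, fun H hFH q hq => ?_⟩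
  rw [hq.unique (isEvidenceLevel_evidenceLevel (hF.mono hFH))]
  exact hH₀ H hFH

lemma isMaxEvidentSup.unique {C F G G' : Finset Ω} (hG : isMaxEvidentSup μ part C F G)
    (hG' : isMaxEvidentSup μ part C F G') : G = G' := by
  obtain ⟨hFG, p, hp, hGlarge, hGmax⟩ := hG
  obtain ⟨hFG', p', hp', hG'large, hG'max⟩ := hG'
  obtain rfl : p = p' := (hG'max G hFG p hp).antisymm (hGmax G' hFG' p' hp')
  exact (hG'large.2 G hGlarge.1).antisymm (hGlarge.2 G' hG'large.1)

end

theorem existsUnique_maxEvidentSup_general [Fintype Ω] [DecidableEq Ω]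
    (μ : Ω → ℝ) (part : Fin 2 → Ω → Finset Ω)
    (hμpos : ∀ ω : Ω, 0 < μ ω)
    (C F : Finset Ω) (hF : F.Nonempty) :
    ∃! G : Finset Ω, isMaxEvidentSup μ part C F G :=
  existsUnique_of_exists_of_unique (exists_isMaxEvidentSup (fun ω => (hμpos ω).le) C hF)
    fun _ _ => isMaxEvidentSup.unique

/-- Every nonempty event has a unique maximally evident `C`-indicating superset. -/
theorem existsUnique_maxEvidentSup [Fintype Ω] [DecidableEq Ω] [Nonempty Ω]
    (μ : Ω → ℝ) (part : Fin 2 → Ω → Finset Ω)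
    (hμpos : ∀ ω : Ω, 0 < μ ω) (hμsum : ∑ ω : Ω, μ ω = 1)
    (hmem : ∀ (i : Fin 2) (ω : Ω), ω ∈ part i ω)
    (hcell : ∀ (i : Fin 2) (ω ω' : Ω), ω' ∈ part i ω → part i ω' = part i ω)
    (C F : Finset Ω) (hF : F.Nonempty) :
    ∃! G : Finset Ω, isMaxEvidentSup μ part C F G :=
  existsUnique_maxEvidentSup_general μ part hμpos C F hF
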